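/- Let Φ be a Young function satisfying the ∇₂-condition with b(Φ) = ∞ or Φ(b(Φ)) = ∞, and let φ : (0,∞) → (0,∞). Then there exists C > 0 such that for every measurable f and every ball B = B(a,r) with ‖f‖_{Φ,φ,B,weak} < ∞: (1/|B|) ∫_B |f(x)| dx ≤ C Φ⁻¹(φ(r)) ‖f‖_{Φ,φ,B,weak}, where ‖f‖_{Φ,φ,B,weak} = inf{λ>0 : sup_{t>0} Φ(t)|{x ∈ B : |f(x)|/λ > t}| ≤ |B|φ(r)}. -/

import Mathlib

open MeasureTheory ENNReal NNReal Metric Set Filter Topology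

noncomputable def geninv (Φ : ℝ≥0∞ → ℝ≥0∞) (u : ℝ≥0∞) : ℝ≥0∞ :=
  sInf {t : ℝ≥0∞ | u < Φ t}

/-- Generalized Young function (class Φ_Y of the paper): increasing, vanishing at 0,
infinite at ∞, convex, left continuous, nondegenerate. -/
def IsYoung (Φ : ℝ≥0∞ → ℝ≥0∞) : Prop :=
  Monotone Φ ∧ Φ 0 = 0 ∧ Φ ⊤ = ⊤ ∧
    (∀ x y a b : ℝ≥0∞, a + b = 1 → Φ (a * x + b * y) ≤ a * Φ x + b * Φ y) ∧
    (∀ t : ℝ≥0∞, 0 < t → ContinuousWithinAt Φ (Set.Iio t) t) ∧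
    (∃ t : ℝ≥0∞, 0 < t ∧ Φ t < ⊤) ∧ (∃ t : ℝ≥0∞, t ≠ ⊤ ∧ 0 < Φ t)

/-- The ∇₂-condition. -/
def Nabla2 (Φ : ℝ≥0∞ → ℝ≥0∞) : Prop :=
  ∃ k : ℝ≥0, 1 < k ∧ ∀ t : ℝ≥0∞, 0 < t → Φ t ≤ Φ ((k : ℝ≥0∞) * t) / (2 * (k : ℝ≥0∞))

/-- Orlicz–Morrey functional on a single ball `B(a,r)`. -/
noncomputable def ballNorm (Φ : ℝ≥0∞ → ℝ≥0∞) (φ : ℝ → ℝ≥0∞) {d : ℕ}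
    (a : EuclideanSpace ℝ (Fin d)) (r : ℝ) (f : EuclideanSpace ℝ (Fin d) → ℝ≥0∞) : ℝ≥0∞ :=
  sInf {l : ℝ≥0∞ | 0 < l ∧
    (∫⁻ x in ball a r, Φ (f x / l)) ≤ φ r * volume (ball a r)}

/-- Weak Orlicz–Morrey functional on a single ball `B(a,r)`. -/
noncomputable def wBallNorm (Φ : ℝ≥0∞ → ℝ≥0∞) (φ : ℝ → ℝ≥0∞) {d : ℕ}
    (a : EuclideanSpace ℝ (Fin d)) (r : ℝ) (f : EuclideanSpace ℝ (Fin d) → ℝ≥0∞) : ℝ≥0∞ :=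
  sInf {l : ℝ≥0∞ | 0 < l ∧ ∀ t : ℝ≥0∞, 0 < t → t ≠ ⊤ →
    Φ t * volume {x ∈ ball a r | t < f x / l} ≤ φ r * volume (ball a r)}

/-- Orlicz–Morrey norm. -/
noncomputable def omNorm (Φ : ℝ≥0∞ → ℝ≥0∞) (φ : ℝ → ℝ≥0∞) {d : ℕ}
    (f : EuclideanSpace ℝ (Fin d) → ℝ≥0∞) : ℝ≥0∞ :=
  ⨆ (a : EuclideanSpace ℝ (Fin d)) (r : ℝ) (_ : 0 < r), ballNorm Φ φ a r f

/-- Weak Orlicz–Morrey norm. -/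
noncomputable def womNorm (Φ : ℝ≥0∞ → ℝ≥0∞) (φ : ℝ → ℝ≥0∞) {d : ℕ}
    (f : EuclideanSpace ℝ (Fin d) → ℝ≥0∞) : ℝ≥0∞ :=
  ⨆ (a : EuclideanSpace ℝ (Fin d)) (r : ℝ) (_ : 0 < r), wBallNorm Φ φ a r f

/-! Put `t = k Φ⁻¹(φ r)`, so that `φ r ≤ Φ t`, and let `l` be admissible in the weak functional.
Iterating ∇₂ gives `Φ (kⁿ t) ≥ (2k)ⁿ φ r`, so the weak bound forces
`|{x ∈ B : f x / l > kⁿ t}| ≤ (2k)⁻ⁿ |B|`. Bounding `f / l` on the layer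
`kⁿ t < f / l ≤ kⁿ⁺¹ t` by `kⁿ⁺¹ t` and summing the geometric series `∑ kⁿ⁺¹ t (2k)⁻ⁿ = 2kt`
bounds the average of `f` over `B` by `(1 + 2k) k Φ⁻¹(φ r) l`. -/

namespace ENNReal

theorem exists_lt_pow_mul {k : ℝ≥0} (hk : 1 < k) {t y : ℝ≥0∞} (ht : t ≠ 0) (hy : y ≠ ⊤) :
    ∃ n : ℕ, y < (k : ℝ≥0∞) ^ n * t := by
  obtain ⟨n, hn⟩ := pow_unbounded_of_one_lt (y / t).toNNReal hk
  refine ⟨n, (ENNReal.div_lt_iff (Or.inl ht) (Or.inr hy)).mp ?_⟩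
  rw [← coe_toNNReal (div_ne_top hy ht)]
  exact_mod_cast hn

theorem le_add_tsum_indicator_Ioi {k : ℝ≥0} (hk : 1 < k) {t : ℝ≥0∞} (ht : t ≠ 0)
    (ht' : t ≠ ⊤) (y : ℝ≥0∞) :
    y ≤ t + ∑' n : ℕ,
      (Ioi ((k : ℝ≥0∞) ^ n * t)).indicator (fun _ => (k : ℝ≥0∞) ^ (n + 1) * t) y := by
  have hk' : (1 : ℝ≥0∞) ≤ k := by exact_mod_cast hk.le
  rcases le_or_gt y t with hyt | hty
  · exact le_add_right hyt
  refine le_add_left ?_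
  rcases eq_or_ne y ⊤ with rfl | hy
  · have hterm : ∀ n : ℕ, t ≤ (Ioi ((k : ℝ≥0∞) ^ n * t)).indicator
        (fun _ => (k : ℝ≥0∞) ^ (n + 1) * t) ⊤ := fun n => by
      rw [indicator_of_mem (show (⊤ : ℝ≥0∞) ∈ Ioi _ from
        mul_lt_top (pow_lt_top coe_lt_top) ht'.lt_top)]
      exact le_mul_of_one_le_left' (one_le_pow₀ hk')
    exact (tsum_const_eq_top_of_ne_zero ht).symm.le.trans (ENNReal.tsum_le_tsum hterm)
  classical
  have hex : ∃ m : ℕ, y ≤ (k : ℝ≥0∞) ^ m * t :=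
    (exists_lt_pow_mul hk ht hy).imp fun _ h => h.le
  obtain ⟨n, hn⟩ : ∃ n, Nat.find hex = n + 1 :=
    Nat.exists_eq_add_one.mpr (Nat.pos_of_ne_zero fun h => by
      simpa [h, hty.not_ge] using Nat.find_spec hex)
  have hlt : (k : ℝ≥0∞) ^ n * t < y := not_le.mp (Nat.find_min hex (by omega))
  calc y ≤ (k : ℝ≥0∞) ^ (n + 1) * t := hn ▸ Nat.find_spec hex
    _ = (Ioi ((k : ℝ≥0∞) ^ n * t)).indicator (fun _ => (k : ℝ≥0∞) ^ (n + 1) * t) y :=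
      (indicator_of_mem (show y ∈ Ioi _ from hlt) (fun _ => _)).symm
    _ ≤ _ := ENNReal.le_tsum n

theorem le_mul_sInf {c x : ℝ≥0∞} {S : Set ℝ≥0∞} (hc₀ : c ≠ 0) (hc : c ≠ ⊤)
    (h : ∀ l ∈ S, x ≤ c * l) : x ≤ c * sInf S := by
  rw [mul_comm, ← ENNReal.div_le_iff_le_mul (Or.inl hc₀) (Or.inl hc)]
  exact le_sInf fun l hl =>
    (ENNReal.div_le_iff_le_mul (Or.inl hc₀) (Or.inl hc)).mpr ((h l hl).trans_eq (mul_comm _ _))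

end ENNReal

section Young

variable {Φ : ℝ≥0∞ → ℝ≥0∞}

theorem pow_mul_le_apply_pow_mul {k : ℝ≥0} (hk : k ≠ 0)
    (hN : ∀ t : ℝ≥0∞, 0 < t → Φ t ≤ Φ ((k : ℝ≥0∞) * t) / (2 * (k : ℝ≥0∞)))
    {t : ℝ≥0∞} (ht : 0 < t) (n : ℕ) :
    (2 * (k : ℝ≥0∞)) ^ n * Φ t ≤ Φ ((k : ℝ≥0∞) ^ n * t) := by
  induction n with
  | zero => simp
  | succ n ih =>
    have hpos : 0 < (k : ℝ≥0∞) ^ n * t :=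
      ENNReal.mul_pos (pow_ne_zero n (by exact_mod_cast hk)) ht.ne'
    calc (2 * (k : ℝ≥0∞)) ^ (n + 1) * Φ t = 2 * k * ((2 * k) ^ n * Φ t) := by ring
      _ ≤ 2 * k * Φ ((k : ℝ≥0∞) ^ n * t) := by gcongr
      _ ≤ Φ (k * ((k : ℝ≥0∞) ^ n * t)) := ENNReal.mul_le_of_le_div' (hN _ hpos)
      _ = Φ ((k : ℝ≥0∞) ^ (n + 1) * t) := by rw [← mul_assoc, ← pow_succ']

theorem lt_apply_of_geninv_lt (hΦ : Monotone Φ) {u t : ℝ≥0∞} (h : geninv Φ u < t) : u < Φ t := by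
  obtain ⟨s, hs, hst⟩ := sInf_lt_iff.mp h
  exact hs.trans_le (hΦ hst.le)

theorem geninv_le_of_lt_apply {u t : ℝ≥0∞} (h : u < Φ t) : geninv Φ u ≤ t :=
  sInf_le h

theorem le_apply_mul_geninv (hΦ : Monotone Φ) {k : ℝ≥0} (hk : 1 < k) {u : ℝ≥0∞}
    (h₀ : geninv Φ u ≠ 0) (h : geninv Φ u ≠ ⊤) : u ≤ Φ (k * geninv Φ u) :=
  have hk' : (1 : ℝ≥0∞) < k := by exact_mod_cast hk
  (lt_apply_of_geninv_lt hΦ <| by simpa using (ENNReal.mul_lt_mul_iff_left h₀ h).mpr hk').le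

theorem le_geninv_of_apply_le (hΦ : Monotone Φ) {u s : ℝ≥0∞} (h : Φ s ≤ u) : s ≤ geninv Φ u :=
  le_sInf fun _ ht => le_of_not_gt fun hts => (ht.trans_le ((hΦ hts.le).trans h)).false

namespace IsYoung

theorem exists_pos_apply_le (hΦ : IsYoung Φ) {u : ℝ≥0∞} (hu : 0 < u) : ∃ s, 0 < s ∧ Φ s ≤ u := by
  obtain ⟨-, hΦ0, -, hconv, -, ⟨s, hs, hΦs⟩, -⟩ := hΦ
  set a := min 1 (u / Φ s)
  have ha : 0 < a := lt_min zero_lt_one (ENNReal.div_pos hu.ne' hΦs.ne)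
  refine ⟨a * s, ENNReal.mul_pos ha.ne' hs.ne', ?_⟩
  calc Φ (a * s) ≤ a * Φ s := by
        simpa [hΦ0] using hconv s 0 a (1 - a) (add_tsub_cancel_of_le (min_le_left _ _))
    _ ≤ u / Φ s * Φ s := by gcongr; exact min_le_right _ _
    _ ≤ u := ENNReal.mul_le_of_le_div le_rfl

theorem geninv_pos (hΦ : IsYoung Φ) {u : ℝ≥0∞} (hu : 0 < u) : 0 < geninv Φ u := by
  obtain ⟨s, hs, hΦs⟩ := hΦ.exists_pos_apply_le hu
  exact hs.trans_le (le_geninv_of_apply_le hΦ.1 hΦs)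

theorem geninv_lt_top (hΦ : IsYoung Φ) (hN : Nabla2 Φ) {u : ℝ≥0∞} (hu : u ≠ ⊤) :
    geninv Φ u < ⊤ := by
  obtain ⟨-, hΦ0, -, -, -, -, ⟨s, hs, hΦs⟩⟩ := hΦ
  obtain ⟨k, hk, hkN⟩ := hN
  have hs0 : 0 < s := pos_iff_ne_zero.mpr fun h => by simp [h, hΦ0] at hΦs
  obtain ⟨n, hn⟩ := ENNReal.exists_lt_pow_mul (k := 2 * k)
    (hk.trans_le (le_mul_of_one_le_left zero_le one_le_two)) hΦs.ne' hu
  push_cast at hn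
  have hgrow := pow_mul_le_apply_pow_mul (zero_lt_one.trans hk).ne' hkN hs0 n
  exact (geninv_le_of_lt_apply (hn.trans_le hgrow)).trans_lt
    (ENNReal.mul_lt_top (ENNReal.pow_lt_top ENNReal.coe_lt_top) hs.lt_top)

end IsYoung

end Young

namespace MeasureTheory

variable {α : Type*} [MeasurableSpace α] {μ : Measure α}

theorem lintegral_le_of_pow_mul_meas_lt_le {k : ℝ≥0} (hk : 1 < k) {t : ℝ≥0∞} (ht : t ≠ 0)
    (ht' : t ≠ ⊤) {g : α → ℝ≥0∞}
    (hg : ∀ n : ℕ, (2 * (k : ℝ≥0∞)) ^ n * μ {x | (k : ℝ≥0∞) ^ n * t < g x} ≤ μ univ) :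
    ∫⁻ x, g x ∂μ ≤ (1 + 2 * k) * t * μ univ := by
  obtain ⟨g', hg'_meas, hg'_le, hg'_int⟩ := exists_measurable_le_lintegral_eq μ g
  have hterm : ∀ n : ℕ, (k : ℝ≥0∞) ^ (n + 1) * t * μ (g' ⁻¹' Ioi ((k : ℝ≥0∞) ^ n * t)) ≤
      k * t * μ univ * 2⁻¹ ^ n := fun n => by
    have hsub : g' ⁻¹' Ioi ((k : ℝ≥0∞) ^ n * t) ⊆ {x | (k : ℝ≥0∞) ^ n * t < g x} :=
      fun x hx => lt_of_lt_of_le hx (hg'_le x)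
    have h2 : (2⁻¹ : ℝ≥0∞) ^ n * 2 ^ n = 1 := by
      rw [← mul_pow, ENNReal.inv_mul_cancel two_ne_zero ofNat_ne_top, one_pow]
    calc (k : ℝ≥0∞) ^ (n + 1) * t * μ (g' ⁻¹' Ioi ((k : ℝ≥0∞) ^ n * t))
        = k * t * (2⁻¹ ^ n * 2 ^ n) * k ^ n * μ (g' ⁻¹' Ioi ((k : ℝ≥0∞) ^ n * t)) := by
          rw [h2]; ring
      _ = k * t * 2⁻¹ ^ n * ((2 * k) ^ n * μ (g' ⁻¹' Ioi ((k : ℝ≥0∞) ^ n * t))) := by ring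
      _ ≤ k * t * 2⁻¹ ^ n * μ univ := by
          gcongr
          exact (by gcongr : _ ≤ (2 * (k : ℝ≥0∞)) ^ n * _).trans (hg n)
      _ = k * t * μ univ * 2⁻¹ ^ n := by ring
  calc ∫⁻ x, g x ∂μ = ∫⁻ x, g' x ∂μ := hg'_int
    _ ≤ ∫⁻ x, (t + ∑' n : ℕ, (Ioi ((k : ℝ≥0∞) ^ n * t)).indicator
          (fun _ => (k : ℝ≥0∞) ^ (n + 1) * t) (g' x)) ∂μ :=
        lintegral_mono fun x => ENNReal.le_add_tsum_indicator_Ioi hk ht ht' (g' x)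
    _ = t * μ univ + ∑' n : ℕ, (k : ℝ≥0∞) ^ (n + 1) * t * μ (g' ⁻¹' Ioi ((k : ℝ≥0∞) ^ n * t)) := by
        rw [lintegral_add_left measurable_const, lintegral_const, lintegral_tsum]
        · simp only [lintegral_indicator_const_comp hg'_meas measurableSet_Ioi]
        · exact fun n => ((measurable_const.indicator measurableSet_Ioi).comp hg'_meas).aemeasurable
    _ ≤ t * μ univ + ∑' n : ℕ, k * t * μ univ * 2⁻¹ ^ n :=
        add_le_add_right (ENNReal.tsum_le_tsum hterm) _
    _ = (1 + 2 * k) * t * μ univ := by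
        rw [ENNReal.tsum_mul_left, ENNReal.tsum_geometric, ENNReal.one_sub_inv_two, inv_inv]
        ring

theorem setLIntegral_le_of_weak_bound {Φ : ℝ≥0∞ → ℝ≥0∞} {k : ℝ≥0} (hk : 1 < k)
    (hN : ∀ t : ℝ≥0∞, 0 < t → Φ t ≤ Φ ((k : ℝ≥0∞) * t) / (2 * (k : ℝ≥0∞)))
    {u t : ℝ≥0∞} (hu₀ : u ≠ 0) (hu : u ≠ ⊤) (ht₀ : t ≠ 0) (ht : t ≠ ⊤) (hΦt : u ≤ Φ t)
    {s : Set α} (hs : MeasurableSet s) {g : α → ℝ≥0∞} {l : ℝ≥0∞} (hl₀ : l ≠ 0) (hl : l ≠ ⊤)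
    (hg : ∀ τ : ℝ≥0∞, 0 < τ → τ ≠ ⊤ → Φ τ * μ {x ∈ s | τ < g x / l} ≤ u * μ s) :
    ∫⁻ x in s, g x ∂μ ≤ (1 + 2 * k) * t * l * μ s := by
  have hmeas : ∀ n : ℕ, (2 * (k : ℝ≥0∞)) ^ n * μ.restrict s {x | (k : ℝ≥0∞) ^ n * t < g x / l} ≤
      μ.restrict s univ := fun n => by
    have hτ₀ : 0 < (k : ℝ≥0∞) ^ n * t :=
      ENNReal.mul_pos (pow_ne_zero n (by exact_mod_cast (zero_lt_one.trans hk).ne')) ht₀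
    have hτ : (k : ℝ≥0∞) ^ n * t ≠ ⊤ :=
      ENNReal.mul_ne_top (ENNReal.pow_ne_top ENNReal.coe_ne_top) ht
    rw [Measure.restrict_apply' hs, Measure.restrict_apply_univ, inter_comm]
    refine (ENNReal.mul_le_mul_iff_right hu₀ hu).mp ?_
    calc u * ((2 * (k : ℝ≥0∞)) ^ n * μ {x ∈ s | (k : ℝ≥0∞) ^ n * t < g x / l})
        = (2 * (k : ℝ≥0∞)) ^ n * u * μ {x ∈ s | (k : ℝ≥0∞) ^ n * t < g x / l} := by ring
      _ ≤ Φ ((k : ℝ≥0∞) ^ n * t) * μ {x ∈ s | (k : ℝ≥0∞) ^ n * t < g x / l} := by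
          gcongr
          exact (by gcongr : _ ≤ _ * Φ t).trans
            (pow_mul_le_apply_pow_mul (zero_lt_one.trans hk).ne' hN (pos_iff_ne_zero.mpr ht₀) n)
      _ ≤ u * μ s := hg _ hτ₀ hτ
  calc ∫⁻ x in s, g x ∂μ = l * ∫⁻ x in s, g x / l ∂μ := by
        rw [← lintegral_const_mul' _ _ hl]
        simp_rw [ENNReal.mul_div_cancel hl₀ hl]
    _ ≤ l * ((1 + 2 * k) * t * μ s) := by
        grw [lintegral_le_of_pow_mul_meas_lt_le hk ht₀ ht hmeas, Measure.restrict_apply_univ]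
    _ = (1 + 2 * k) * t * l * μ s := by ring

end MeasureTheory

theorem stmt10_general {d : ℕ} (Φ : ℝ≥0∞ → ℝ≥0∞) (hΦ : IsYoung Φ) (hN : Nabla2 Φ)
    (φ : ℝ → ℝ≥0∞) (hφ : ∀ r : ℝ, 0 < r → 0 < φ r ∧ φ r < ⊤) :
    ∃ C : ℝ≥0∞, 0 < C ∧ C ≠ ⊤ ∧
      ∀ f : EuclideanSpace ℝ (Fin d) → ℝ≥0∞, ∀ (a : EuclideanSpace ℝ (Fin d)) (r : ℝ),
        0 < r → wBallNorm Φ φ a r f < ⊤ →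
          (volume (ball a r))⁻¹ * (∫⁻ x in ball a r, f x) ≤
            C * geninv Φ (φ r) * wBallNorm Φ φ a r f := by
  have ⟨k, hk, hkN⟩ := hN
  have hk₀ : (k : ℝ≥0∞) ≠ 0 := by exact_mod_cast (zero_lt_one.trans hk).ne'
  refine ⟨(1 + 2 * k) * k, by positivity, by finiteness, fun f a r hr _ => ?_⟩
  obtain ⟨hφ₀, hφ⟩ := hφ r hr
  set t := geninv Φ (φ r)
  have ht₀ : t ≠ 0 := (hΦ.geninv_pos hφ₀).ne'
  have ht : t ≠ ⊤ := (hΦ.geninv_lt_top hN hφ.ne).ne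
  have hB₀ : volume (ball a r) ≠ 0 := (measure_ball_pos volume a hr).ne'
  have hB : volume (ball a r) ≠ ⊤ := measure_ball_lt_top.ne
  refine ENNReal.le_mul_sInf (by positivity) (by finiteness) fun l ⟨hl₀, hl⟩ => ?_
  rcases eq_or_ne l ⊤ with rfl | hl'
  · rw [ENNReal.mul_top (by positivity)]; exact le_top
  calc (volume (ball a r))⁻¹ * ∫⁻ x in ball a r, f x
      ≤ (volume (ball a r))⁻¹ * ((1 + 2 * k) * (k * t) * l * volume (ball a r)) := by
        gcongr
        exact setLIntegral_le_of_weak_bound hk hkN hφ₀.ne' hφ.ne (mul_ne_zero hk₀ ht₀)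
          (ENNReal.mul_ne_top ENNReal.coe_ne_top ht) (le_apply_mul_geninv hΦ.1 hk ht₀ ht)
          measurableSet_ball hl₀.ne' hl' hl
    _ = (1 + 2 * k) * k * t * l * ((volume (ball a r))⁻¹ * volume (ball a r)) := by ring
    _ = (1 + 2 * k) * k * t * l := by rw [ENNReal.inv_mul_cancel hB₀ hB, mul_one]

/-- For `Φ ∈ ∇₂` (with `b(Φ) = ∞` or `Φ(b(Φ)) = ∞`), averages are controlled by the
weak Orlicz–Morrey ball functional. -/
theorem stmt10 {d : ℕ} (Φ : ℝ≥0∞ → ℝ≥0∞) (hΦ : IsYoung Φ) (hN : Nabla2 Φ)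
    (hb : sInf {t : ℝ≥0∞ | Φ t = ⊤} = ⊤ ∨ Φ (sInf {t : ℝ≥0∞ | Φ t = ⊤}) = ⊤)
    (φ : ℝ → ℝ≥0∞) (hφ : ∀ r : ℝ, 0 < r → 0 < φ r ∧ φ r < ⊤) :
    ∃ C : ℝ≥0∞, 0 < C ∧ C ≠ ⊤ ∧
      ∀ f : EuclideanSpace ℝ (Fin d) → ℝ≥0∞, ∀ (a : EuclideanSpace ℝ (Fin d)) (r : ℝ),
        0 < r → wBallNorm Φ φ a r f < ⊤ →
          (volume (ball a r))⁻¹ * (∫⁻ x in ball a r, f x) ≤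
            C * geninv Φ (φ r) * wBallNorm Φ φ a r f :=
  stmt10_general Φ hΦ hN φ hφ
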